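/- arXiv:2404.13841 — 2 statements merged into one kernel-verified Lean document; each statement's English description precedes it below -/
import Mathlib

section
/- Let f_1,...,f_S be nonnegative real-valued functions on a common domain W, and for α ≥ 1 let w*_α ∈ W be a minimizer of Σ_s f_s(w)^α over W. Then the empirical variance of the vector (f_1(w*_2),...,f_S(w*_2)) is at most the empirical variance of (f_1(w*_1),...,f_S(w*_1)), where the empirical variance of (x_1,...,x_S) is (Σ_s x_s²)/S − ((Σ_s x_s)/S)². (Here the minimization is over a single variable w applied to all tasks, so that all coordinates are jointly determined by w.) -/
/-- The α = 2 optimum of the α-fair MMFL objective has empirical variance of task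
losses at most that of the α = 1 optimum. -/
theorem variance_alpha2_le_alpha1 {W : Type*} (S : ℕ) (hS : 1 ≤ S)
    (f : Fin S → W → ℝ) (hf : ∀ s w, 0 ≤ f s w)
    (w1 w2 : W)
    (hw1 : ∀ w : W, ∑ s, f s w1 ≤ ∑ s, f s w)
    (hw2 : ∀ w : W, ∑ s, (f s w2) ^ 2 ≤ ∑ s, (f s w) ^ 2) :
    (∑ s, (f s w2) ^ 2) / S - ((∑ s, f s w2) / S) ^ 2
      ≤ (∑ s, (f s w1) ^ 2) / S - ((∑ s, f s w1) / S) ^ 2 := by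
  have hA : ∑ s, f s w1 ≤ ∑ s, f s w2 := hw1 w2
  have hB : ∑ s, (f s w2) ^ 2 ≤ ∑ s, (f s w1) ^ 2 := hw2 w1
  have hA1 : 0 ≤ ∑ s, f s w1 := Finset.sum_nonneg fun s _ => hf s w1
  have hSpos : (0:ℝ) < S := by exact_mod_cast hS
  have h1 : (∑ s, (f s w2) ^ 2) / S ≤ (∑ s, (f s w1) ^ 2) / S :=
    div_le_div_of_nonneg_right hB hSpos.le
  have h2 : ((∑ s, f s w1) / S) ^ 2 ≤ ((∑ s, f s w2) / S) ^ 2 := by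
    apply pow_le_pow_left₀ (by positivity)
    exact div_le_div_of_nonneg_right hA hSpos.le
  linarith
end

section
/- Let f_1,...,f_S be nonnegative functions on a set W, let w*_1 minimize Σ_s f_s(w) over W and w*_2 minimize Σ_s f_s(w)² over W. If the quantities Σ_s f_s(w*_2)² and Σ_s f_s(w*_1)² are positive, then (Σ_s f_s(w*_2)) / sqrt(Σ_s f_s(w*_2)²) ≥ (Σ_s f_s(w*_1)) / sqrt(Σ_s f_s(w*_1)²). That is, the α=2 optimum has higher cosine similarity with the all-ones vector than the α=1 optimum. -/
/-- The α = 2 optimum has higher cosine similarity (with the all-ones vector)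
across task losses than the α = 1 optimum. -/
theorem cosine_alpha2_ge_alpha1 {W : Type*} (S : ℕ) (hS : 1 ≤ S)
    (f : Fin S → W → ℝ) (hf : ∀ s w, 0 ≤ f s w)
    (w1 w2 : W)
    (hw1 : ∀ w : W, ∑ s, f s w1 ≤ ∑ s, f s w)
    (hw2 : ∀ w : W, ∑ s, (f s w2) ^ 2 ≤ ∑ s, (f s w) ^ 2)
    (hpos2 : 0 < ∑ s, (f s w2) ^ 2) (hpos1 : 0 < ∑ s, (f s w1) ^ 2) :
    (∑ s, f s w1) / Real.sqrt (∑ s, (f s w1) ^ 2)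
      ≤ (∑ s, f s w2) / Real.sqrt (∑ s, (f s w2) ^ 2) := by
  have hA : ∑ s, f s w1 ≤ ∑ s, f s w2 := hw1 w2
  have hB : ∑ s, (f s w2) ^ 2 ≤ ∑ s, (f s w1) ^ 2 := hw2 w1
  have hA0 : 0 ≤ ∑ s, f s w1 := Finset.sum_nonneg fun s _ => hf s w1
  have h2 : 0 < Real.sqrt (∑ s, (f s w2) ^ 2) := Real.sqrt_pos.mpr hpos2
  calc (∑ s, f s w1) / Real.sqrt (∑ s, (f s w1) ^ 2)
      ≤ (∑ s, f s w1) / Real.sqrt (∑ s, (f s w2) ^ 2) := by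
        exact div_le_div_of_nonneg_left hA0 h2 (Real.sqrt_le_sqrt hB)
    _ ≤ (∑ s, f s w2) / Real.sqrt (∑ s, (f s w2) ^ 2) := by
        gcongr
end
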